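/- arXiv:2410.18240 — 7 statements merged into one kernel-verified Lean document; each statement's English description precedes it below -/
import Mathlib

section
/- Let α ∈ (0,1), γ > 0 and θ < -1. Then the function y ↦ (y-γ)^α + θ·y^α on (γ, ∞) attains its unique global maximum at y* = γ / (1 - |θ|^{-1/(1-α)}), and moreover for every q ≥ 0 the equation α[(y-γ)^{α-1} + θ y^{α-1}] = q admits a unique solution y ∈ (γ, ∞). -/
/-!
Write `θ = -c ^ (α - 1)` with `c = |θ| ^ (-1 / (1 - α)) ∈ (0, 1)`. The derivative of
`f y = (y - γ) ^ α + θ * y ^ α` is `α * g y` with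
`g y = (y - γ) ^ (α - 1) + θ * y ^ (α - 1)
     = y ^ (α - 1) * ((1 - γ / y) ^ (α - 1) - c ^ (α - 1))`.
Since `1 - γ / y` increases from `0` to `1` and equals `c` exactly at `y* = γ / (1 - c)`,
`g` is positive before `y*` and negative after it, so `f` peaks at `y*`. On `(γ, y*]` both factors
of `g` are nonnegative and decreasing, so `g` decreases strictly there from `+∞` to `0`; this
gives the unique solution of `α * g y = q` for `q ≥ 0`.
-/

open Real Set Filter Topology

noncomputable def shiftRpow (γ θ p y : ℝ) : ℝ := (y - γ) ^ p + θ * y ^ p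

section

variable {γ θ p c β y : ℝ}

theorem hasDerivAt_shiftRpow (hy : y ≠ 0) (hyγ : y ≠ γ) :
    HasDerivAt (shiftRpow γ θ p) (p * shiftRpow γ θ (p - 1) y) y := by
  refine ((((hasDerivAt_id y).sub_const γ).rpow_const (Or.inl (sub_ne_zero.2 hyγ))).add
    ((hasDerivAt_rpow_const (Or.inl hy)).const_mul θ)).congr_deriv ?_
  simp only [shiftRpow, id]
  ring

theorem continuousOn_shiftRpow (hγ : 0 ≤ γ) : ContinuousOn (shiftRpow γ θ p) (Ioi γ) :=
  fun _ hy =>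
    (hasDerivAt_shiftRpow (hγ.trans_lt hy).ne' (ne_of_gt hy)).continuousAt.continuousWithinAt

theorem tendsto_shiftRpow_nhdsGT (hγ : 0 < γ) (hβ : β < 0) :
    Tendsto (shiftRpow γ θ β) (𝓝[>] γ) atTop := by
  have hsub : Tendsto (fun y => y - γ) (𝓝[>] γ) (𝓝[>] 0) := by
    refine tendsto_nhdsWithin_iff.2
      ⟨?_, eventually_nhdsWithin_of_forall fun _ hy => sub_pos.2 (mem_Ioi.1 hy)⟩
    exact tendsto_nhdsWithin_of_tendsto_nhds ((continuous_sub_right γ).tendsto' γ 0 (sub_self γ))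
  have hpow : Tendsto (fun y => θ * y ^ β) (𝓝[>] γ) (𝓝 (θ * γ ^ β)) :=
    tendsto_nhdsWithin_of_tendsto_nhds
      ((continuousAt_id.rpow_const (Or.inl hγ.ne')).const_mul θ).tendsto
  exact ((tendsto_rpow_neg_nhdsGT_zero hβ).comp hsub).atTop_add hpow

theorem one_sub_div_rpow_strictAntiOn (hγ : 0 < γ) (hβ : β < 0) :
    StrictAntiOn (fun y => (1 - γ / y) ^ β) (Ioi γ) := by
  intro y₁ (hy₁ : γ < y₁) y₂ (hy₂ : γ < y₂) h
  have hpos : 0 < 1 - γ / y₁ := sub_pos.2 ((div_lt_one (hγ.trans hy₁)).2 hy₁)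
  refine rpow_lt_rpow_of_neg hpos ?_ hβ
  gcongr
  exact hγ.trans hy₁

theorem one_sub_div_div_one_sub (hγ : γ ≠ 0) : 1 - γ / (γ / (1 - c)) = c := by
  rw [div_div_cancel₀ hγ]
  ring

theorem shiftRpow_eq_mul (hγ : 0 < γ) (hy : γ < y) :
    shiftRpow γ θ p y = y ^ p * ((1 - γ / y) ^ p + θ) := by
  have hy0 : 0 < y := hγ.trans hy
  have hsub : y - γ = y * (1 - γ / y) := by field_simp
  rw [shiftRpow, hsub, mul_rpow hy0.le (sub_nonneg.2 ((div_le_one hy0).2 hy.le))]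
  ring

theorem lt_div_one_sub (hγ : 0 < γ) (hc₀ : 0 < c) (hc₁ : c < 1) : γ < γ / (1 - c) := by
  rw [lt_div_iff₀ (sub_pos.2 hc₁)]
  exact mul_lt_of_lt_one_right hγ (sub_lt_self 1 hc₀)

/-- Stated so that the sign can be read off from the strict antitonicity of
`y ↦ (1 - γ / y) ^ β`. -/
theorem shiftRpow_neg_rpow_eq_mul_sub (hγ : 0 < γ) (hy : γ < y) :
    shiftRpow γ (-c ^ β) β y =
      y ^ β * ((1 - γ / y) ^ β - (1 - γ / (γ / (1 - c))) ^ β) := by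
  rw [shiftRpow_eq_mul hγ hy, one_sub_div_div_one_sub hγ.ne', ← sub_eq_add_neg]

theorem shiftRpow_pos (hγ : 0 < γ) (hβ : β < 0) (hy : γ < y) (hy' : y < γ / (1 - c)) :
    0 < shiftRpow γ (-c ^ β) β y := by
  rw [shiftRpow_neg_rpow_eq_mul_sub hγ hy]
  exact mul_pos (rpow_pos_of_pos (hγ.trans hy) β)
    (sub_pos.2 (one_sub_div_rpow_strictAntiOn hγ hβ hy (hy.trans hy') hy'))

theorem shiftRpow_neg (hγ : 0 < γ) (hβ : β < 0) (hc₀ : 0 < c) (hc₁ : c < 1)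
    (hy : γ / (1 - c) < y) : shiftRpow γ (-c ^ β) β y < 0 := by
  have hγc := lt_div_one_sub hγ hc₀ hc₁
  rw [shiftRpow_neg_rpow_eq_mul_sub hγ (hγc.trans hy)]
  exact mul_neg_of_pos_of_neg (rpow_pos_of_pos (hγ.trans (hγc.trans hy)) β)
    (sub_neg.2 (one_sub_div_rpow_strictAntiOn hγ hβ hγc (hγc.trans hy) hy))

theorem shiftRpow_div_one_sub (hγ : 0 < γ) (hc₀ : 0 < c) (hc₁ : c < 1) :
    shiftRpow γ (-c ^ β) β (γ / (1 - c)) = 0 := by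
  rw [shiftRpow_neg_rpow_eq_mul_sub hγ (lt_div_one_sub hγ hc₀ hc₁), sub_self, mul_zero]

theorem shiftRpow_strictAntiOn (hγ : 0 < γ) (hβ : β < 0) :
    StrictAntiOn (shiftRpow γ (-c ^ β) β) (Ioc γ (γ / (1 - c))) := by
  intro y₁ ⟨hy₁, hy₁'⟩ y₂ ⟨hy₂, hy₂'⟩ h
  have hφ := one_sub_div_rpow_strictAntiOn hγ hβ
  rw [shiftRpow_neg_rpow_eq_mul_sub hγ hy₁, shiftRpow_neg_rpow_eq_mul_sub hγ hy₂]
  set φ := fun y => (1 - γ / y) ^ β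
  set y₀ := γ / (1 - c)
  calc y₂ ^ β * (φ y₂ - φ y₀) ≤ y₁ ^ β * (φ y₂ - φ y₀) :=
        mul_le_mul_of_nonneg_right (rpow_le_rpow_of_nonpos (hγ.trans hy₁) h.le hβ.le)
          (sub_nonneg.2 (hφ.antitoneOn hy₂ (hy₁.trans_le hy₁') hy₂'))
    _ < y₁ ^ β * (φ y₁ - φ y₀) :=
        mul_lt_mul_of_pos_left (sub_lt_sub_right (hφ hy₁ hy₂ h) _)
          (rpow_pos_of_pos (hγ.trans hy₁) β)

theorem shiftRpow_lt_shiftRpow_div_one_sub (hγ : 0 < γ) (hp₀ : 0 < p) (hp₁ : p < 1)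
    (hc₀ : 0 < c) (hc₁ : c < 1) (hy : γ < y) (hne : y ≠ γ / (1 - c)) :
    shiftRpow γ (-c ^ (p - 1)) p y < shiftRpow γ (-c ^ (p - 1)) p (γ / (1 - c)) := by
  have hβ : p - 1 < 0 := by linarith
  have hγc := lt_div_one_sub hγ hc₀ hc₁
  have hderiv : ∀ x, γ < x → deriv (shiftRpow γ (-c ^ (p - 1)) p) x =
      p * shiftRpow γ (-c ^ (p - 1)) (p - 1) x :=
    fun x hx => (hasDerivAt_shiftRpow (hγ.trans hx).ne' hx.ne').deriv
  have hcont := continuousOn_shiftRpow (θ := -c ^ (p - 1)) (p := p) hγ.le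
  rcases hne.lt_or_gt with h | h
  · refine strictMonoOn_of_deriv_pos (convex_Icc _ _) (hcont.mono fun x hx => hy.trans_le hx.1)
      (fun x hx => ?_) (left_mem_Icc.2 h.le) (right_mem_Icc.2 h.le) h
    rw [interior_Icc] at hx
    rw [hderiv x (hy.trans hx.1)]
    exact mul_pos hp₀ (shiftRpow_pos hγ hβ (hy.trans hx.1) hx.2)
  · refine strictAntiOn_of_deriv_neg (convex_Icc _ _) (hcont.mono fun x hx => hγc.trans_le hx.1)
      (fun x hx => ?_) (left_mem_Icc.2 h.le) (right_mem_Icc.2 h.le) h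
    rw [interior_Icc] at hx
    rw [hderiv x (hγc.trans hx.1)]
    exact mul_neg_of_pos_of_neg hp₀ (shiftRpow_neg hγ hβ hc₀ hc₁ hx.1)

theorem existsUnique_shiftRpow_eq (hγ : 0 < γ) (hβ : β < 0) (hc₀ : 0 < c) (hc₁ : c < 1)
    {m : ℝ} (hm : 0 ≤ m) : ∃! y, y ∈ Ioi γ ∧ shiftRpow γ (-c ^ β) β y = m := by
  have hγc := lt_div_one_sub hγ hc₀ hc₁
  obtain ⟨a, hma, haγ, hac⟩ :
      ∃ a, m ≤ shiftRpow γ (-c ^ β) β a ∧ γ < a ∧ a < γ / (1 - c) :=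
    (((tendsto_shiftRpow_nhdsGT hγ hβ).eventually_ge_atTop m).and (Ioo_mem_nhdsGT hγc)).exists
  obtain ⟨y, hy, hym⟩ := intermediate_value_Icc' hac.le
    ((continuousOn_shiftRpow hγ.le).mono fun x hx => haγ.trans_le hx.1)
    ⟨(shiftRpow_div_one_sub hγ hc₀ hc₁).trans_le hm, hma⟩
  refine ⟨y, ⟨haγ.trans_le hy.1, hym⟩, fun z ⟨hz, hzm⟩ => ?_⟩
  have hzc : z ≤ γ / (1 - c) :=
    le_of_not_gt fun h => (shiftRpow_neg hγ hβ hc₀ hc₁ h).not_ge (hzm ▸ hm)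
  exact (shiftRpow_strictAntiOn hγ hβ).injOn ⟨hz, hzc⟩ ⟨haγ.trans_le hy.1, hy.2⟩
    (hzm.trans hym.symm)

end

theorem stmt4 (α γ θ : ℝ) (hα : α ∈ Set.Ioo (0:ℝ) 1) (hγ : 0 < γ) (hθ : θ < -1)
    (ystar : ℝ) (hystar : ystar = γ / (1 - |θ| ^ (-(1 / (1 - α))))) :
    ystar ∈ Set.Ioi γ ∧
    (∀ y ∈ Set.Ioi γ, y ≠ ystar →
      (y - γ) ^ α + θ * y ^ α < (ystar - γ) ^ α + θ * ystar ^ α) ∧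
    (∀ q : ℝ, 0 ≤ q →
      ∃! y : ℝ, y ∈ Set.Ioi γ ∧ α * ((y - γ) ^ (α - 1) + θ * y ^ (α - 1)) = q) := by
  obtain ⟨hα₀, hα₁⟩ := hα
  have hθ₁ : 1 < |θ| := by rw [abs_of_neg (by linarith)]; linarith
  have hexp : -(1 / (1 - α)) < 0 := neg_lt_zero.2 (one_div_pos.2 (sub_pos.2 hα₁))
  set c := |θ| ^ (-(1 / (1 - α))) with hc
  have hc₀ : 0 < c := by positivity
  have hc₁ : c < 1 := rpow_lt_one_of_one_lt_of_neg hθ₁ hexp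
  have hθc : θ = -c ^ (α - 1) := by
    rw [hc, ← rpow_mul (abs_nonneg θ), show -(1 / (1 - α)) * (α - 1) = 1 by field_simp; ring,
      rpow_one, abs_of_neg (by linarith), neg_neg]
  clear_value c
  subst hystar hθc
  refine ⟨lt_div_one_sub hγ hc₀ hc₁, fun y hy hne =>
    shiftRpow_lt_shiftRpow_div_one_sub hγ hα₀ hα₁ hc₀ hc₁ hy hne, fun q hq => ?_⟩
  have hscale : ∀ y, α * shiftRpow γ (-c ^ (α - 1)) (α - 1) y = q ↔
      shiftRpow γ (-c ^ (α - 1)) (α - 1) y = q / α :=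
    fun y => by rw [eq_div_iff hα₀.ne', mul_comm]
  show ∃! y, y ∈ Ioi γ ∧ α * shiftRpow γ (-c ^ (α - 1)) (α - 1) y = q
  simpa only [hscale] using
    existsUnique_shiftRpow_eq hγ (sub_neg.2 hα₁) hc₀ hc₁ (div_nonneg hq hα₀.le)
end

section
/- Let α ∈ (0,1), γ > 0, k > 0, and set θ̲ = -(1 + k^{1/(1-α)})^{1-α}. Define F(y) = U(y-γ) + θ̲·y^α for y ≥ 0, where U(x) = x^α for x ≥ 0 and U(x) = -k|x|^α for x < 0. Then F(0) = F(γ(1 + k^{-1/(1-α)})) = -k·γ^α, and F(y) < -k·γ^α for all y ∈ [0,∞) \ {0, γ(1 + k^{-1/(1-α)})}. -/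
/-!
Put `c = k ^ (1 / (1 - α))`, so that `k = c ^ (1 - α)` and `θ = -(1 + c) ^ (1 - α)`.
For `y ≥ γ` the bound `F y ≤ -k γ ^ α` is the two-term Hölder inequality
`(y - γ) ^ α * 1 ^ (1 - α) + γ ^ α * c ^ (1 - α) ≤ y ^ α * (1 + c) ^ (1 - α)`,
with equality exactly when `(y - γ, 1)` is proportional to `(γ, c)`, i.e. at `y₀`.
For `0 < y ≤ γ`, subadditivity of `x ↦ x ^ α` and `k < (1 + c) ^ (1 - α)` give the strict bound.
-/

open Real

section PerspectiveHolder

variable {p u v a b : ℝ}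

lemma rpow_mul_rpow_one_sub_eq_mul_div_rpow (hu : 0 ≤ u) (hv : 0 < v) :
    u ^ p * v ^ (1 - p) = v * (u / v) ^ p := by
  rw [div_rpow hu hv.le, rpow_sub hv, rpow_one]
  field_simp

lemma rpow_mul_rpow_one_sub_add_of_div_eq (hu : 0 ≤ u) (hv : 0 < v) (ha : 0 ≤ a) (hb : 0 < b)
    (h : u / v = a / b) :
    u ^ p * v ^ (1 - p) + a ^ p * b ^ (1 - p) = (u + a) ^ p * (v + b) ^ (1 - p) := by
  have hsum : (u + a) / (v + b) = a / b := by
    rw [div_eq_div_iff hv.ne' hb.ne'] at h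
    rw [div_eq_div_iff (by positivity) hb.ne']
    linarith
  rw [rpow_mul_rpow_one_sub_eq_mul_div_rpow hu hv, rpow_mul_rpow_one_sub_eq_mul_div_rpow ha hb,
    rpow_mul_rpow_one_sub_eq_mul_div_rpow (by positivity) (by positivity), h, hsum]
  ring

/-- Strict two-term Hölder inequality, via Jensen for `x ↦ x ^ p` at the points `u / v`, `a / b`
with weights proportional to `v`, `b`. -/
lemma rpow_mul_rpow_one_sub_add_lt (hp₀ : 0 < p) (hp₁ : p < 1) (hu : 0 ≤ u) (hv : 0 < v)
    (ha : 0 ≤ a) (hb : 0 < b) (h : u / v ≠ a / b) :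
    u ^ p * v ^ (1 - p) + a ^ p * b ^ (1 - p) < (u + a) ^ p * (v + b) ^ (1 - p) := by
  have hvb : 0 < v + b := by positivity
  have hJensen := (strictConcaveOn_rpow hp₀ hp₁).2 (x := u / v) (y := a / b)
    (div_nonneg hu hv.le) (div_nonneg ha hb.le) h (div_pos hv hvb) (div_pos hb hvb)
    (by field_simp)
  have hmean : v / (v + b) * (u / v) + b / (v + b) * (a / b) = (u + a) / (v + b) := by
    field_simp
  simp only [smul_eq_mul, hmean] at hJensen
  rw [rpow_mul_rpow_one_sub_eq_mul_div_rpow hu hv, rpow_mul_rpow_one_sub_eq_mul_div_rpow ha hb,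
    rpow_mul_rpow_one_sub_eq_mul_div_rpow (by positivity) hvb]
  have := mul_lt_mul_of_pos_left hJensen hvb
  field_simp at this ⊢
  linarith

end PerspectiveHolder

lemma neg_mul_rpow_sub_sub_mul_rpow_lt {p k K y γ : ℝ} (hp₀ : 0 < p) (hp₁ : p ≤ 1) (hk : 0 ≤ k)
    (hkK : k < K) (hy : 0 < y) (hyγ : y ≤ γ) :
    -k * (γ - y) ^ p - K * y ^ p < -k * γ ^ p := by
  have hsub : γ ^ p ≤ (γ - y) ^ p + y ^ p := by
    simpa using rpow_add_le_add_rpow (sub_nonneg.2 hyγ) hy.le hp₀.le hp₁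
  have hyp : 0 < y ^ p := rpow_pos_of_pos hy p
  nlinarith

theorem stmt5 (α γ k : ℝ) (hα : α ∈ Set.Ioo (0:ℝ) 1) (hγ : 0 < γ) (hk : 0 < k)
    (θ : ℝ) (hθ : θ = -(1 + k ^ (1 / (1 - α))) ^ (1 - α))
    (U F : ℝ → ℝ)
    (hU : ∀ x : ℝ, U x = if 0 ≤ x then x ^ α else -k * |x| ^ α)
    (hF : ∀ y : ℝ, F y = U (y - γ) + θ * y ^ α)
    (y₀ : ℝ) (hy₀ : y₀ = γ * (1 + k ^ (-(1 / (1 - α))))) :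
    F 0 = -k * γ ^ α ∧ F y₀ = -k * γ ^ α ∧
    (∀ y : ℝ, 0 ≤ y → y ≠ 0 → y ≠ y₀ → F y < -k * γ ^ α) := by
  obtain ⟨hα₀, hα₁⟩ := hα
  set c := k ^ (1 / (1 - α)) with hc_def
  have hc : 0 < c := by positivity
  have hck : c ^ (1 - α) = k := by
    rw [hc_def, ← rpow_mul hk.le, one_div_mul_cancel (by linarith), rpow_one]
  have hy₀c : y₀ = γ / c + γ := by rw [hy₀, rpow_neg hk.le]; ring
  have hU_nonneg : ∀ x, 0 ≤ x → U x = x ^ α := fun x hx => by rw [hU, if_pos hx]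
  have hU_nonpos : ∀ x ≤ 0, U x = -k * (-x) ^ α := fun x hx => by
    rcases hx.lt_or_eq with hx | rfl
    · rw [hU, if_neg hx.not_ge, abs_of_neg hx]
    · simp [hU, zero_rpow hα₀.ne']
  refine ⟨?_, ?_, fun y hy hy0 hyy₀ => ?_⟩
  · rw [hF, hU_nonpos _ (by linarith), zero_rpow hα₀.ne']
    ring_nf
  · have h := rpow_mul_rpow_one_sub_add_of_div_eq (p := α) (div_nonneg hγ.le hc.le) one_pos
      hγ.le hc (by ring)
    rw [one_rpow, hck, mul_one, ← hy₀c] at h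
    rw [hF, show y₀ - γ = γ / c by rw [hy₀c, add_sub_cancel_right], hU_nonneg _ (by positivity), hθ]
    linarith
  · rcases le_or_gt y γ with hyγ | hγy
    · have hkK : k < (1 + c) ^ (1 - α) := by
        rw [← hck]; exact rpow_lt_rpow hc.le (by linarith) (by linarith)
      rw [hF, hU_nonpos _ (by linarith), hθ, neg_sub]
      linarith [neg_mul_rpow_sub_sub_mul_rpow_lt hα₀ hα₁.le hk.le hkK
        (lt_of_le_of_ne hy (Ne.symm hy0)) hyγ]
    · have h := rpow_mul_rpow_one_sub_add_lt hα₀ hα₁ (sub_nonneg.2 hγy.le) one_pos hγ.le hc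
        (by rw [div_one]; contrapose! hyy₀; rw [hy₀c, ← hyy₀]; ring)
      rw [one_rpow, hck, mul_one, sub_add_cancel] at h
      rw [hF, hU_nonneg _ (by linarith), hθ]
      linarith
end

section
/- Let α ∈ (0,1), γ > 0, k > 0, θ̲ = -(1 + k^{1/(1-α)})^{1-α}, and θ < θ̲. Define F(y) = U(y-γ) + θ·y^α for y ≥ 0 with U the piecewise power utility. Then F attains its unique global maximum on [0,∞) at y = 0, with maximum value -k·γ^α. -/
open Real

private lemma holder2 {α a₁ a₂ b₁ b₂ : ℝ} (hα : 0 < α) (hα1 : α < 1)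
    (ha₁ : 0 ≤ a₁) (ha₂ : 0 ≤ a₂) (hb₁ : 0 < b₁) (hb₂ : 0 < b₂) :
    a₁ ^ α * b₁ ^ (1 - α) + a₂ ^ α * b₂ ^ (1 - α)
      ≤ (a₁ + a₂) ^ α * (b₁ + b₂) ^ (1 - α) := by
  set A := a₁ + a₂ with hA
  set B := b₁ + b₂ with hB
  have hB0 : 0 < B := by positivity
  rcases eq_or_lt_of_le (by positivity : (0:ℝ) ≤ A) with h0 | hA0
  · have h1 : a₁ = 0 := by nlinarith
    have h2 : a₂ = 0 := by nlinarith
    simp [h1, h2, ← h0, Real.zero_rpow hα.ne']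
  · have key : ∀ a b : ℝ, 0 ≤ a → 0 < b →
        a ^ α * b ^ (1 - α) ≤ A ^ α * B ^ (1 - α) * (α * (a / A) + (1 - α) * (b / B)) := by
      intro a b ha hb
      have h : (a / A) ^ α * (b / B) ^ (1 - α) ≤ α * (a / A) + (1 - α) * (b / B) :=
        Real.geom_mean_le_arith_mean2_weighted hα.le (by linarith)
          (by positivity) (by positivity) (by ring)
      have hmul := mul_le_mul_of_nonneg_left h
        (by positivity : (0:ℝ) ≤ A ^ α * B ^ (1 - α))
      calc a ^ α * b ^ (1 - α)
          = A ^ α * B ^ (1 - α) * ((a / A) ^ α * (b / B) ^ (1 - α)) := by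
            rw [Real.div_rpow ha hA0.le, Real.div_rpow hb.le hB0.le]
            have h1 : A ^ α ≠ 0 := by positivity
            have h2 : B ^ (1 - α) ≠ 0 := by positivity
            field_simp
        _ ≤ _ := hmul
    have k1 := key a₁ b₁ ha₁ hb₁
    have k2 := key a₂ b₂ ha₂ hb₂
    have hsum : A ^ α * B ^ (1 - α) * (α * (a₁ / A) + (1 - α) * (b₁ / B))
        + A ^ α * B ^ (1 - α) * (α * (a₂ / A) + (1 - α) * (b₂ / B))
        = A ^ α * B ^ (1 - α) := by
      have : α * (a₁ / A) + (1 - α) * (b₁ / B) + (α * (a₂ / A) + (1 - α) * (b₂ / B)) = 1 := by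
        field_simp
        ring
      rw [← mul_add, this, mul_one]
    linarith

theorem stmt6 (α γ k θ : ℝ) (hα : α ∈ Set.Ioo (0:ℝ) 1) (hγ : 0 < γ) (hk : 0 < k)
    (hθ : θ < -(1 + k ^ (1 / (1 - α))) ^ (1 - α))
    (U F : ℝ → ℝ)
    (hU : ∀ x : ℝ, U x = if 0 ≤ x then x ^ α else -k * |x| ^ α)
    (hF : ∀ y : ℝ, F y = U (y - γ) + θ * y ^ α) :
    F 0 = -k * γ ^ α ∧ (∀ y : ℝ, 0 ≤ y → y ≠ 0 → F y < -k * γ ^ α) := by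
  obtain ⟨hα0, hα1⟩ := hα
  have h1α : 0 < 1 - α := by linarith
  set c := k ^ (1 / (1 - α)) with hc
  have hc0 : 0 < c := Real.rpow_pos_of_pos hk _
  have hck : c ^ (1 - α) = k := by
    rw [hc, ← Real.rpow_mul hk.le, one_div, inv_mul_cancel₀ h1α.ne', Real.rpow_one]
  -- θ < -k
  have hθk : θ < -k := by
    have h2 : c ^ (1 - α) ≤ (1 + c) ^ (1 - α) :=
      Real.rpow_le_rpow hc0.le (by linarith) h1α.le
    rw [hck] at h2
    linarith
  constructor
  · rw [hF, hU]
    have : ¬ (0:ℝ) ≤ 0 - γ := by linarith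
    rw [if_neg this]
    rw [Real.zero_rpow hα0.ne']
    rw [show (0:ℝ) - γ = -γ by ring, abs_neg, abs_of_pos hγ]
    ring
  · intro y hy hy0
    have hypos : 0 < y := lt_of_le_of_ne hy (Ne.symm hy0)
    have hyα : 0 < y ^ α := Real.rpow_pos_of_pos hypos _
    rw [hF, hU]
    rcases le_or_gt γ y with hcase | hcase
    · -- y ≥ γ : use Hölder
      rw [if_pos (by linarith : (0:ℝ) ≤ y - γ)]
      have hH := holder2 hα0 hα1 (by linarith : (0:ℝ) ≤ y - γ) hγ.le one_pos hc0
      rw [Real.one_rpow, hck, mul_one] at hH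
      have hsum : y - γ + γ = y := by ring
      rw [hsum] at hH
      -- (y-γ)^α + γ^α * k ≤ y^α * (1+c)^(1-α)
      have hθ' : θ * y ^ α < -(1 + c) ^ (1 - α) * y ^ α := by
        apply mul_lt_mul_of_pos_right hθ hyα
      nlinarith [hH, hθ']
    · -- 0 < y < γ : subadditivity
      rw [if_neg (by linarith : ¬ (0:ℝ) ≤ y - γ)]
      rw [show |y - γ| = γ - y by rw [abs_of_neg (by linarith)]; ring]
      have hgy : 0 < γ - y := by linarith
      -- γ^α ≤ (γ-y)^α + y^α
      have hsub : γ ^ α ≤ (γ - y) ^ α + y ^ α := by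
        have e1 : γ ^ α = (γ - y) * γ ^ (α - 1) + y * γ ^ (α - 1) := by
          have h := Real.rpow_add hγ 1 (α - 1)
          rw [show (1:ℝ) + (α - 1) = α by ring, Real.rpow_one] at h
          rw [h]; ring
        have d1 : γ ^ (α - 1) ≤ (γ - y) ^ (α - 1) :=
          Real.rpow_le_rpow_of_nonpos hgy (by linarith) (by linarith)
        have d2 : γ ^ (α - 1) ≤ y ^ (α - 1) :=
          Real.rpow_le_rpow_of_nonpos hypos (by linarith) (by linarith)
        have e2 : (γ - y) * (γ - y) ^ (α - 1) = (γ - y) ^ α := by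
          have h := Real.rpow_add hgy 1 (α - 1)
          rw [show (1:ℝ) + (α - 1) = α by ring, Real.rpow_one] at h
          rw [h]
        have e3 : y * y ^ (α - 1) = y ^ α := by
          have h := Real.rpow_add hypos 1 (α - 1)
          rw [show (1:ℝ) + (α - 1) = α by ring, Real.rpow_one] at h
          rw [h]
        nlinarith [mul_le_mul_of_nonneg_left d1 hgy.le, mul_le_mul_of_nonneg_left d2 hypos.le]
      have hθ' : θ * y ^ α < -k * y ^ α := mul_lt_mul_of_pos_right hθk hyα
      nlinarith [hsub, hθ']
end

section
/- Let 𝒴 be a nonempty set, u, g : 𝒴 → ℝ with 0 ≤ g(Y) ≤ M for all Y, c ∈ (0, 1/M), and define Φ(θ) = sup_{Y ∈ 𝒴}(u(Y) + θ·g(Y)) (assumed finite for all θ). For each κ ∈ [0,1] let θ*(κ) be the unique fixed point of θ ↦ c·Φ(κθ). Suppose θ*(κ₂) = c·(u(Y*) + κ₂θ*(κ₂)·g(Y*)) for some maximizer Y* of Φ(κ₂θ*(κ₂)). Then for any κ₁ ∈ [0,1]: θ*(κ₂) - θ*(κ₁) ≤ c·(κ₂θ*(κ₂) - κ₁θ*(κ₁))·g(Y*),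 and consequently θ*(κ₂) ≤ [(1 - κ₁·c·g(Y*)) / (1 - κ₂·c·g(Y*))]·θ*(κ₁). -/
theorem stmt10 {𝒴 : Type*} [Nonempty 𝒴] (u g : 𝒴 → ℝ) (M : ℝ) (hM : 0 < M)
    (hg : ∀ Y : 𝒴, g Y ∈ Set.Icc (0:ℝ) M)
    (c : ℝ) (hc : c ∈ Set.Ioo (0:ℝ) (1 / M))
    (Φ : ℝ → ℝ)
    (hΦ : ∀ θ : ℝ, IsLUB (Set.range fun Y : 𝒴 => u Y + θ * g Y) (Φ θ))
    (θs : ℝ → ℝ)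
    (hfix : ∀ κ ∈ Set.Icc (0:ℝ) 1, c * Φ (κ * θs κ) = θs κ)
    (huniq : ∀ κ ∈ Set.Icc (0:ℝ) 1, ∀ θ : ℝ, c * Φ (κ * θ) = θ → θ = θs κ)
    (κ₁ κ₂ : ℝ) (hκ₁ : κ₁ ∈ Set.Icc (0:ℝ) 1) (hκ₂ : κ₂ ∈ Set.Icc (0:ℝ) 1)
    (Ystar : 𝒴)
    (hYstar : u Ystar + (κ₂ * θs κ₂) * g Ystar = Φ (κ₂ * θs κ₂)) :
    θs κ₂ - θs κ₁ ≤ c * (κ₂ * θs κ₂ - κ₁ * θs κ₁) * g Ystar ∧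
    θs κ₂ ≤ (1 - κ₁ * c * g Ystar) / (1 - κ₂ * c * g Ystar) * θs κ₁ := by
  obtain ⟨hc0, hcM⟩ := hc
  have hgY := hg Ystar
  have hle : u Ystar + (κ₁ * θs κ₁) * g Ystar ≤ Φ (κ₁ * θs κ₁) :=
    (hΦ (κ₁ * θs κ₁)).1 ⟨Ystar, rfl⟩
  have h1 : θs κ₂ - θs κ₁ ≤ c * (κ₂ * θs κ₂ - κ₁ * θs κ₁) * g Ystar := by
    have e2 : θs κ₂ = c * (u Ystar + (κ₂ * θs κ₂) * g Ystar) := by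
      rw [hYstar, hfix κ₂ hκ₂]
    have e1 : c * (u Ystar + (κ₁ * θs κ₁) * g Ystar) ≤ θs κ₁ :=
      (mul_le_mul_of_nonneg_left hle hc0.le).trans_eq (hfix κ₁ hκ₁)
    nlinarith
  refine ⟨h1, ?_⟩
  have hcgM : c * g Ystar < 1 := by
    calc c * g Ystar ≤ c * M := by nlinarith [hgY.2]
    _ < 1 := by rw [lt_div_iff₀ hM] at hcM; linarith
  have hpos : 0 < 1 - κ₂ * c * g Ystar := by
    rcases hκ₂ with ⟨h0, h1'⟩
    nlinarith [mul_nonneg (by linarith : (0:ℝ) ≤ 1 - κ₂) (mul_nonneg hc0.le hgY.1)]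
  rw [div_mul_eq_mul_div, le_div_iff₀ hpos]
  nlinarith
end

section
/- Let Φ, θ* be as above (Φ(θ) = sup_Y(u(Y) + θg(Y)), 0 ≤ g ≤ M, c ∈ (0,1/M), θ*(κ) the unique fixed point of θ ↦ cΦ(κθ)), and assume every problem Φ(κθ*(κ)) admits a maximizer with g-value strictly positive. If θ*(0) > 0, then κ ↦ θ*(κ) is strictly increasing on [0,1]. -/
theorem stmt12 {𝒴 : Type*} [Nonempty 𝒴] (u g : 𝒴 → ℝ) (M : ℝ) (hM : 0 < M)
    (hg : ∀ Y : 𝒴, g Y ∈ Set.Icc (0:ℝ) M)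
    (c : ℝ) (hc : c ∈ Set.Ioo (0:ℝ) (1 / M))
    (Φ : ℝ → ℝ)
    (hΦ : ∀ θ : ℝ, IsLUB (Set.range fun Y : 𝒴 => u Y + θ * g Y) (Φ θ))
    (θs : ℝ → ℝ)
    (hfix : ∀ κ ∈ Set.Icc (0:ℝ) 1, c * Φ (κ * θs κ) = θs κ)
    (huniq : ∀ κ ∈ Set.Icc (0:ℝ) 1, ∀ θ : ℝ, c * Φ (κ * θ) = θ → θ = θs κ)
    (hmax : ∀ κ ∈ Set.Icc (0:ℝ) 1,
      ∃ Y : 𝒴, u Y + (κ * θs κ) * g Y = Φ (κ * θs κ) ∧ 0 < g Y)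
    (h0 : 0 < θs 0) :
    StrictMonoOn θs (Set.Icc (0:ℝ) 1) := by
  obtain ⟨hc0, hcM⟩ := hc
  have hcM' : c * M < 1 := (lt_div_iff₀ hM).mp hcM
  have hub : ∀ θ (Y : 𝒴), u Y + θ * g Y ≤ Φ θ := fun θ Y => (hΦ θ).1 ⟨Y, rfl⟩
  have h3 := hfix 0 ⟨le_refl 0, zero_le_one⟩
  rw [zero_mul] at h3
  have hlip : ∀ x ≤ (0:ℝ), Φ 0 + M * x ≤ Φ x := by
    intro x hx
    have h : Φ 0 ≤ Φ x - M * x := by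
      apply (hΦ 0).2
      rintro z ⟨Y, rfl⟩
      have h1 := hub x Y
      have h2 : x * M ≤ x * g Y := by nlinarith [(hg Y).2]
      simp only [zero_mul]
      nlinarith
    linarith
  have hpos : ∀ κ ∈ Set.Icc (0:ℝ) 1, 0 < θs κ := by
    intro κ hκ
    by_contra h
    push_neg at h
    have hx : κ * θs κ ≤ 0 := mul_nonpos_of_nonneg_of_nonpos hκ.1 h
    have h1 := hlip _ hx
    have h2 := hfix κ hκ
    nlinarith [hκ.1, hκ.2, mul_le_mul_of_nonneg_left h1 hc0.le,
      mul_nonneg (mul_nonneg hc0.le hM.le) (mul_nonneg hκ.1 (neg_nonneg.mpr h)),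
      mul_le_mul_of_nonneg_right hcM'.le (mul_nonneg hκ.1 (neg_nonneg.mpr h))]
  intro κ₁ hκ₁ κ₂ hκ₂ h12
  have hθ₁ := hpos κ₁ hκ₁
  have hθ₂ := hpos κ₂ hκ₂
  obtain ⟨Y, hY, hgY⟩ := hmax κ₁ hκ₁
  have hub2 := hub (κ₂ * θs κ₂) Y
  have hf1 := hfix κ₁ hκ₁
  have hf2 := hfix κ₂ hκ₂
  have hgM := (hg Y).2
  by_contra hle
  push_neg at hle
  have key : c * g Y * (κ₂ * θs κ₂ - κ₁ * θs κ₁) ≤ θs κ₂ - θs κ₁ := by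
    nlinarith [mul_le_mul_of_nonneg_left hub2 hc0.le]
  have ha : c * g Y * κ₂ ≤ 1 := by
    nlinarith [mul_le_mul_of_nonneg_left hgM hc0.le,
      mul_le_mul_of_nonneg_right hcM'.le hκ₂.1,
      mul_le_mul_of_nonneg_left hκ₂.2 (mul_nonneg hc0.le hgY.le)]
  nlinarith [mul_pos (mul_pos (mul_pos hc0 hgY) (sub_pos.mpr h12)) hθ₁,
    mul_le_mul_of_nonneg_right ha (sub_nonneg.mpr hle)]
end

section
/- Let Φ, θ* be as above with 0 ≤ g ≤ M, c ∈ (0, 1/M). Then for all κ₁, κ₂ ∈ [0,1]: |θ*(κ₁) - θ*(κ₂)| ≤ (cM / (1 - cM)) · |θ*(κ₁)| · |κ₁ - κ₂|. In particular κ ↦ θ*(κ) is continuous on [0,1]. -/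
theorem stmt14 {𝒴 : Type*} [Nonempty 𝒴] (u g : 𝒴 → ℝ) (M : ℝ) (hM : 0 < M)
    (hg : ∀ Y : 𝒴, g Y ∈ Set.Icc (0:ℝ) M)
    (c : ℝ) (hc : c ∈ Set.Ioo (0:ℝ) (1 / M))
    (Φ : ℝ → ℝ)
    (hΦ : ∀ θ : ℝ, IsLUB (Set.range fun Y : 𝒴 => u Y + θ * g Y) (Φ θ))
    (θs : ℝ → ℝ)
    (hfix : ∀ κ ∈ Set.Icc (0:ℝ) 1, c * Φ (κ * θs κ) = θs κ)
    (huniq : ∀ κ ∈ Set.Icc (0:ℝ) 1, ∀ θ : ℝ, c * Φ (κ * θ) = θ → θ = θs κ) :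
    (∀ κ₁ ∈ Set.Icc (0:ℝ) 1, ∀ κ₂ ∈ Set.Icc (0:ℝ) 1,
      |θs κ₁ - θs κ₂| ≤ (c * M / (1 - c * M)) * |θs κ₁| * |κ₁ - κ₂|) ∧
    ContinuousOn θs (Set.Icc (0:ℝ) 1) := by
  obtain ⟨hc0, hc1⟩ := hc
  have hcM : c * M < 1 := by
    have := (lt_div_iff₀ hM).mp hc1
    linarith
  have hcM' : 0 < 1 - c * M := by linarith
  -- Lipschitz bound on Φ
  have hlip : ∀ a b : ℝ, Φ a - Φ b ≤ M * |a - b| := by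
    intro a b
    have h1 : Φ a ≤ Φ b + M * |a - b| := by
      apply (hΦ a).2
      rintro x ⟨Y, rfl⟩
      have h2 : u Y + b * g Y ≤ Φ b := (hΦ b).1 ⟨Y, rfl⟩
      have hgY := hg Y
      have : (a - b) * g Y ≤ M * |a - b| := by
        calc (a - b) * g Y ≤ |a - b| * g Y := by
              apply mul_le_mul_of_nonneg_right (le_abs_self _) hgY.1
          _ ≤ |a - b| * M := mul_le_mul_of_nonneg_left hgY.2 (abs_nonneg _)
          _ = M * |a - b| := mul_comm _ _
      rw [sub_mul] at this
      show u Y + a * g Y ≤ Φ b + M * |a - b|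
      linarith
    linarith
  have hlipabs : ∀ a b : ℝ, |Φ a - Φ b| ≤ M * |a - b| := by
    intro a b
    rw [abs_sub_le_iff]
    refine ⟨hlip a b, ?_⟩
    have := hlip b a
    rwa [abs_sub_comm] at this
  have key : ∀ κ₁ ∈ Set.Icc (0:ℝ) 1, ∀ κ₂ ∈ Set.Icc (0:ℝ) 1,
      |θs κ₁ - θs κ₂| ≤ (c * M / (1 - c * M)) * |θs κ₁| * |κ₁ - κ₂| := by
    intro κ₁ h1 κ₂ h2
    have e1 := hfix κ₁ h1
    have e2 := hfix κ₂ h2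
    have step : |θs κ₁ - θs κ₂| ≤ c * M * (|θs κ₁| * |κ₁ - κ₂| + |θs κ₁ - θs κ₂|) := by
      calc |θs κ₁ - θs κ₂| = |c * Φ (κ₁ * θs κ₁) - c * Φ (κ₂ * θs κ₂)| := by rw [e1, e2]
        _ = c * |Φ (κ₁ * θs κ₁) - Φ (κ₂ * θs κ₂)| := by
            rw [← mul_sub, abs_mul, abs_of_pos hc0]
        _ ≤ c * (M * |κ₁ * θs κ₁ - κ₂ * θs κ₂|) := by
            exact mul_le_mul_of_nonneg_left (hlipabs _ _) hc0.le
        _ ≤ c * M * (|θs κ₁| * |κ₁ - κ₂| + |θs κ₁ - θs κ₂|) := by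
            have : |κ₁ * θs κ₁ - κ₂ * θs κ₂| ≤ |θs κ₁| * |κ₁ - κ₂| + |θs κ₁ - θs κ₂| := by
              have : κ₁ * θs κ₁ - κ₂ * θs κ₂ = (κ₁ - κ₂) * θs κ₁ + κ₂ * (θs κ₁ - θs κ₂) := by
                ring
              rw [this]
              calc |(κ₁ - κ₂) * θs κ₁ + κ₂ * (θs κ₁ - θs κ₂)|
                  ≤ |(κ₁ - κ₂) * θs κ₁| + |κ₂ * (θs κ₁ - θs κ₂)| := abs_add_le _ _
                _ ≤ |θs κ₁| * |κ₁ - κ₂| + |θs κ₁ - θs κ₂| := by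
                    rw [abs_mul, abs_mul]
                    have hκ2 : |κ₂| ≤ 1 := abs_le.mpr ⟨by linarith [h2.1], h2.2⟩
                    have := mul_le_mul_of_nonneg_right hκ2 (abs_nonneg (θs κ₁ - θs κ₂))
                    nlinarith [abs_nonneg (κ₁ - κ₂), abs_nonneg (θs κ₁)]
            nlinarith [mul_pos hc0 hM]
    rw [div_mul_eq_mul_div, div_mul_eq_mul_div, le_div_iff₀ hcM']
    nlinarith
  refine ⟨key, ?_⟩
  intro κ₀ h0
  rw [Metric.continuousWithinAt_iff]
  intro ε hε
  set K := (c * M / (1 - c * M)) * |θs κ₀| with hK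
  have hK0 : 0 ≤ K := by
    apply mul_nonneg (div_nonneg (by positivity) hcM'.le) (abs_nonneg _)
  refine ⟨ε / (K + 1), by positivity, fun x hx hd => ?_⟩
  have hb := key κ₀ h0 x hx
  rw [Real.dist_eq] at hd ⊢
  rw [abs_sub_comm] at hb
  calc |θs x - θs κ₀| ≤ K * |κ₀ - x| := hb
    _ ≤ K * |x - κ₀| := by rw [abs_sub_comm]
    _ ≤ K * (ε / (K + 1)) := mul_le_mul_of_nonneg_left hd.le hK0
    _ < ε := by
        rw [mul_div_assoc'] at *
        rw [div_lt_iff₀ (by linarith)]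
        nlinarith
end

section
/- Let (Ω, ℱ, P) be a probability space, Z ≥ 0 an integrable random variable with continuous distribution function L (i.e., Z is atomless), and E ∈ ℱ with p = P(E). Then E[Z·1_{L(Z) < p}] ≤ E[Z·1_E]. -/
/-! Since `L` is continuous and nondecreasing, the event `A = {L(Z) < p}` is a sublevel set
`{Z < t}` with `L t = p` and `t ≥ 0`, so it has probability at most `P(E)`. Swapping `A \ E` (where
`Z ≤ t`) for `E \ A` (where `Z ≥ t`, and which is at least as large) can only increase the
integral. When `p ≥ 1` or the event is empty, it is contained in `E` up to a null set. -/

open MeasureTheory ProbabilityTheory Set Filter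

theorem setIntegral_le_setIntegral_of_threshold {Ω : Type*} [MeasurableSpace Ω] {μ : Measure Ω}
    [IsFiniteMeasure μ] {Z : Ω → ℝ} (hZ : Integrable Z μ) {A E : Set Ω} (hA : MeasurableSet A)
    (hE : MeasurableSet E) (hAE : μ.real A ≤ μ.real E) {t : ℝ} (ht : 0 ≤ t)
    (hZA : ∀ ω ∈ A, Z ω ≤ t) (hZAc : ∀ ω ∉ A, t ≤ Z ω) :
    ∫ ω in A, Z ω ∂μ ≤ ∫ ω in E, Z ω ∂μ := by
  have hdiff : μ.real (A \ E) ≤ μ.real (E \ A) := by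
    have hA' := measureReal_inter_add_sdiff (μ := μ) (s := A) hE
    have hE' := measureReal_inter_add_sdiff (μ := μ) (s := E) hA
    rw [inter_comm] at hE'
    linarith
  have key : ∫ ω in A \ E, Z ω ∂μ ≤ ∫ ω in E \ A, Z ω ∂μ := calc
    _ ≤ ∫ _ in A \ E, t ∂μ :=
        setIntegral_mono_on hZ.integrableOn integrableOn_const (hA.diff hE)
          fun ω hω => hZA ω hω.1
    _ = μ.real (A \ E) * t := by rw [setIntegral_const, smul_eq_mul]
    _ ≤ μ.real (E \ A) * t := by gcongr
    _ = ∫ _ in E \ A, t ∂μ := by rw [setIntegral_const, smul_eq_mul]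
    _ ≤ ∫ ω in E \ A, Z ω ∂μ :=
        setIntegral_mono_on integrableOn_const hZ.integrableOn (hE.diff hA)
          fun ω hω => hZAc ω hω.2
  have hsplitA := integral_inter_add_sdiff hE (hZ.integrableOn (s := A))
  have hsplitE := integral_inter_add_sdiff hA (hZ.integrableOn (s := E))
  rw [inter_comm] at hsplitE
  linarith

theorem Monotone.exists_eq_and_setOf_lt_eq_Iio {L : ℝ → ℝ} (hmono : Monotone L)
    (hcont : Continuous L) {p : ℝ} (hlt : ∃ z, L z < p) (hge : ∃ z, p ≤ L z) :
    ∃ t, L t = p ∧ {z | L z < p} = Iio t := by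
  set S := {z | L z < p}
  obtain ⟨z₁, hz₁⟩ := hge
  have hbdd : BddAbove S :=
    ⟨z₁, fun z hz => le_of_not_ge fun h => (hz.trans_le hz₁).not_ge (hmono h)⟩
  have hS : S = Iio (sSup S) := by
    ext z
    refine ⟨fun hz => ?_, fun hz => ?_⟩
    · obtain ⟨z', hzz', hz'⟩ :=
        Eventually.exists_gt ((hcont.isOpen_preimage _ isOpen_Iio).mem_nhds hz)
      exact hzz'.trans_le (le_csSup hbdd hz')
    · obtain ⟨s, hs, hzs⟩ := exists_lt_of_lt_csSup hlt hz
      exact (hmono hzs.le).trans_lt hs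
  refine ⟨sSup S, le_antisymm ?_ ?_, hS⟩
  · have hclosed : IsClosed {z | L z ≤ p} := isClosed_le hcont continuous_const
    exact hclosed.closure_subset_iff.2 (fun z (hz : L z < p) => hz.le) (csSup_mem_closure hlt hbdd)
  · have : sSup S ∉ Iio (sSup S) := self_notMem_Iio
    rw [← hS] at this
    exact not_lt.1 this

theorem stmt17 {Ω : Type*} [MeasurableSpace Ω] (μ : Measure Ω) [IsProbabilityMeasure μ]
    (Z : Ω → ℝ) (hZmeas : Measurable Z) (hZnonneg : ∀ ω, 0 ≤ Z ω)
    (hZint : Integrable Z μ)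
    (L : ℝ → ℝ) (hL : ∀ z : ℝ, L z = (μ {ω | Z ω ≤ z}).toReal)
    (hLcont : Continuous L)
    (E : Set Ω) (hE : MeasurableSet E)
    (p : ℝ) (hp : p = (μ E).toReal) :
    ∫ ω in {ω | L (Z ω) < p}, Z ω ∂μ ≤ ∫ ω in E, Z ω ∂μ := by
  set A := {ω | L (Z ω) < p}
  have : IsProbabilityMeasure (μ.map Z) := Measure.isProbabilityMeasure_map hZmeas.aemeasurable
  have hLcdf : L = cdf (μ.map Z) := funext fun z => by
    rw [hL, cdf_eq_real, measureReal_def, Measure.map_apply hZmeas measurableSet_Iic]; rfl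
  have hle_of_null : μ (A \ E) = 0 → ∫ ω in A, Z ω ∂μ ≤ ∫ ω in E, Z ω ∂μ := fun h =>
    setIntegral_mono_set hZint.integrableOn (ae_of_all _ fun ω => hZnonneg ω) (ae_le_set.2 h)
  rcases le_or_gt 1 p with hp1 | hp1
  · have hE1 : μ E = 1 :=
      (ENNReal.toReal_eq_one_iff _).1 (le_antisymm measureReal_le_one (hp ▸ hp1))
    exact hle_of_null (measure_mono_null (fun ω h => h.2) ((prob_compl_eq_zero_iff hE).2 hE1))
  obtain hA0 | ⟨ω₀, hω₀⟩ := A.eq_empty_or_nonempty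
  · exact hle_of_null (by simp [hA0])
  have hge : ∃ z, p ≤ L z := by
    rw [hLcdf]
    exact ((tendsto_cdf_atTop _).eventually_const_le hp1).exists
  obtain ⟨t, hLt, hS⟩ := (hLcdf ▸ (cdf (μ.map Z)).mono).exists_eq_and_setOf_lt_eq_Iio hLcont
    ⟨Z ω₀, hω₀⟩ hge
  have hA : A = Z ⁻¹' Iio t := congrArg (Z ⁻¹' ·) hS
  rw [hA] at hω₀ ⊢
  refine setIntegral_le_setIntegral_of_threshold hZint (hZmeas measurableSet_Iio) hE ?_
    ((hZnonneg ω₀).trans hω₀.le) (fun ω hω => le_of_lt hω) (fun ω hω => not_lt.1 hω)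
  calc μ.real (Z ⁻¹' Iio t) ≤ μ.real {ω | Z ω ≤ t} :=
        measureReal_mono fun ω (hω : Z ω < t) => hω.le
    _ = μ.real E := by rw [measureReal_def, ← hL, hLt, hp]; rfl
end
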